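/- Let $A$ be a unital associative ring and let $p, q \ge 2$ be integers. Then for all $a_1, \dots, a_p, b_1, \dots, b_q, v, w \in A$, writing $c_1 = [a_1, \dots, a_p]$ and $c_2 = [b_1, \dots, b_q]$, the element $[c_1, v][c_2, w] + [c_1, w][c_2, v]$ belongs to $T^{(p+q+1)}(A)$. -/

import Mathlib

/-- The ring commutator `[a, b] = a * b - b * a`. -/
def brk {A : Type*} [NonUnitalNonAssocRing A] (a b : A) : A := a * b - b * a

/-- The left-normed commutator `[a 0, a 1, ..., a (k-1)]`. -/
def lnc {A : Type*} [NonUnitalNonAssocRing A] : ∀ {k : ℕ}, (Fin k → A) → A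
  | 0, _ => 0
  | 1, a => a 0
  | k + 2, a => brk (lnc (Fin.init a)) (a (Fin.last (k + 1)))

/-- `T A m` is the two-sided ideal of `A` generated by all left-normed commutators
of length `m` (for `m = 1` this is all of `A`). -/
def T (A : Type*) [NonUnitalNonAssocRing A] (m : ℕ) : TwoSidedIdeal A :=
  TwoSidedIdeal.span {x | ∃ a : Fin m → A, x = lnc a}

/-!
Write `c₁ = [a₁, …, a_p]` and `c₂ = [b₁, …, b_q]`. Expanding with the Leibniz rule,

  `[c₁, v][c₂, w] + [c₁, w][c₂, v]`
  `  = [c₁, [c₂, vw]] - [c₁, [[c₂, v], w]] - v[c₁, [c₂, w]] - w[c₁, [c₂, v]]`.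

By the Jacobi identity, the bracket of a sum of left-normed commutators of length `k` with one of
length `m` is a sum of left-normed commutators of length `k + m`; hence every term on the right lies
in `T^(p+q+1)`.
-/

section NonAssoc

variable {A : Type*} [NonUnitalNonAssocRing A]

lemma lnc_zero (a : Fin 0 → A) : lnc a = 0 := rfl

lemma lnc_snoc {k : ℕ} (a : Fin (k + 1) → A) (x : A) :
    lnc (Fin.snoc a x : Fin (k + 2) → A) = brk (lnc a) x := by
  rw [lnc, Fin.init_snoc, Fin.snoc_last]

lemma brk_zero_left (x : A) : brk 0 x = 0 := by simp [brk]

lemma brk_zero_right (x : A) : brk x 0 = 0 := by simp [brk]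

lemma brk_add_left (x y z : A) : brk (x + y) z = brk x z + brk y z := by
  simp only [brk, add_mul, mul_add]; abel

lemma brk_neg_left (x y : A) : brk (-x) y = -brk x y := by
  simp only [brk, neg_mul, mul_neg]; abel

lemma brk_add_right (x y z : A) : brk x (y + z) = brk x y + brk x z := by
  simp only [brk, add_mul, mul_add]; abel

lemma brk_neg_right (x y : A) : brk x (-y) = -brk x y := by
  simp only [brk, neg_mul, mul_neg]; abel

variable (A) in
def lncClosure (m : ℕ) : AddSubgroup A :=
  AddSubgroup.closure {x | ∃ a : Fin m → A, x = lnc a}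

lemma lnc_mem_lncClosure {m : ℕ} (a : Fin m → A) : lnc a ∈ lncClosure A m :=
  AddSubgroup.subset_closure ⟨a, rfl⟩

lemma mem_T_of_mem_lncClosure {m : ℕ} {x : A} (hx : x ∈ lncClosure A m) : x ∈ T A m := by
  induction hx using AddSubgroup.closure_induction with
  | mem y hy => exact TwoSidedIdeal.subset_span hy
  | zero => exact zero_mem _
  | add _ _ _ _ hy hz => exact add_mem hy hz
  | neg _ _ hy => exact neg_mem hy

lemma brk_mem_lncClosure_succ {k : ℕ} {c : A} (hc : c ∈ lncClosure A k) (x : A) :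
    brk c x ∈ lncClosure A (k + 1) := by
  induction hc using AddSubgroup.closure_induction with
  | mem y hy =>
    obtain ⟨a, rfl⟩ := hy
    cases k with
    | zero => simpa only [lnc_zero, brk_zero_left] using zero_mem _
    | succ k => simpa only [lnc_snoc] using lnc_mem_lncClosure (Fin.snoc a x)
  | zero => simpa only [brk_zero_left] using zero_mem _
  | add y z _ _ hy hz => simpa only [brk_add_left] using add_mem hy hz
  | neg y _ hy => simpa only [brk_neg_left] using neg_mem hy

lemma T_succ_succ_le (k : ℕ) : T A (k + 2) ≤ T A (k + 1) := by
  refine TwoSidedIdeal.span_le.2 ?_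
  rintro _ ⟨a, rfl⟩
  have ha : lnc (Fin.init a) ∈ T A (k + 1) := TwoSidedIdeal.subset_span ⟨_, rfl⟩
  exact sub_mem ((T A (k + 1)).mul_mem_right _ _ ha) ((T A (k + 1)).mul_mem_left _ _ ha)

end NonAssoc

section Assoc

variable {A : Type*} [NonUnitalRing A]

lemma brk_brk_right (x y z : A) : brk x (brk y z) = brk (brk x y) z - brk (brk x z) y := by
  simp only [brk]; noncomm_ring

theorem brk_lnc_mem_lncClosure {k : ℕ} {c : A} (hc : c ∈ lncClosure A k) :
    ∀ {m : ℕ} (b : Fin m → A), brk c (lnc b) ∈ lncClosure A (k + m)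
  | 0, b => by simpa only [lnc_zero, brk_zero_right] using zero_mem _
  | 1, b => brk_mem_lncClosure_succ hc (b 0)
  | m + 2, b => by
    rw [lnc, brk_brk_right]
    refine sub_mem (brk_mem_lncClosure_succ (brk_lnc_mem_lncClosure hc (Fin.init b)) _) ?_
    have h := brk_lnc_mem_lncClosure (brk_mem_lncClosure_succ hc (b (Fin.last (m + 1))))
      (Fin.init b)
    rwa [Nat.add_right_comm, add_assoc] at h

theorem brk_mem_lncClosure {k m : ℕ} {c d : A} (hc : c ∈ lncClosure A k)
    (hd : d ∈ lncClosure A m) : brk c d ∈ lncClosure A (k + m) := by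
  induction hd using AddSubgroup.closure_induction with
  | mem y hy =>
    obtain ⟨b, rfl⟩ := hy
    exact brk_lnc_mem_lncClosure hc b
  | zero => simpa only [brk_zero_right] using zero_mem _
  | add y z _ _ hy hz => simpa only [brk_add_right] using add_mem hy hz
  | neg y _ hy => simpa only [brk_neg_right] using neg_mem hy

lemma brk_mul_brk_add_brk_mul_brk (c d v w : A) :
    brk c v * brk d w + brk c w * brk d v =
      brk c (brk d (v * w)) - brk c (brk (brk d v) w) - v * brk c (brk d w)
        - w * brk c (brk d v) := by
  simp only [brk]; noncomm_ring

end Assoc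

theorem comm_c1_c2_cross_mem_general {A : Type*} [Ring A] (p q : ℕ)
    (a : Fin p → A) (b : Fin q → A) (v w : A) :
    brk (lnc a) v * brk (lnc b) w + brk (lnc a) w * brk (lnc b) v ∈ T A (p + q + 1) := by
  have hc := lnc_mem_lncClosure a
  have hd := lnc_mem_lncClosure b
  have h₁ (x : A) : brk (lnc a) (brk (lnc b) x) ∈ T A (p + q + 1) :=
    mem_T_of_mem_lncClosure <|
      brk_mem_lncClosure (k := p) (m := q + 1) hc (brk_mem_lncClosure_succ hd x)
  have h₂ : brk (lnc a) (brk (brk (lnc b) v) w) ∈ T A (p + q + 1) :=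
    T_succ_succ_le (p + q) <| mem_T_of_mem_lncClosure <|
      brk_mem_lncClosure (k := p) (m := q + 2) hc
        (brk_mem_lncClosure_succ (brk_mem_lncClosure_succ hd v) w)
  rw [brk_mul_brk_add_brk_mul_brk]
  exact sub_mem (sub_mem (sub_mem (h₁ (v * w)) h₂) (TwoSidedIdeal.mul_mem_left _ v _ (h₁ w)))
    (TwoSidedIdeal.mul_mem_left _ w _ (h₁ v))

theorem comm_c1_c2_cross_mem {A : Type*} [Ring A] (p q : ℕ) (hp : 2 ≤ p) (hq : 2 ≤ q)
    (a : Fin p → A) (b : Fin q → A) (v w : A) :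
    brk (lnc a) v * brk (lnc b) w + brk (lnc a) w * brk (lnc b) v ∈ T A (p + q + 1) :=
  comm_c1_c2_cross_mem_general p q a b v w
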